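/- Let p be a prime, let ℓ ≥ 1, let S = 𝔽_p[t_1,…,t_ℓ], and let (b_1,…,b_ℓ) be a regular sequence in S consisting of homogeneous polynomials, with d_i = deg b_i > 0. Fix an integer m with 1 ≤ m ≤ ℓ, and set I = the ideal generated by {b_i·b_j : 1 ≤ i, j ≤ m} ∪ {b_k : m < k ≤ ℓ} and J = (b_1,…,b_ℓ). Then both I and J are homogeneous ideals, and for every degree n ≥ 0 one has dim_{𝔽_p}(S/I)_n = dim_{𝔽_p}(S/J)_n + Σ_{i=1}^{m} dim_{𝔽_p}(S/J)_{n−d_i}, where (−)_n denotes the degree-n graded piece of the graded quotient ring. In other words, there is a degree-preserving 𝔽_p-linear isomorphism S/I ≅ S/J ⊕ ⊕_{i=1}^{m} (S/J)(−d_i). -/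

import Mathlib

/-!
Let `J = (b_1, …, b_ℓ)` and let `I ⊆ J` be the ideal of the statement. Since `J b_i ⊆ I` for
`i ≤ m` and `b_k ∈ I` for `k > m`, the map `⨁_{i ≤ m} S(-d_i) → J/I`, `(x_i) ↦ ∑ x_i b_i`, is
surjective and vanishes on `⨁ J(-d_i)`. Regularity makes this the whole kernel: moving the
generators of `I` to the other side turns `∑_{i ≤ m} x_i b_i ∈ I` into a syzygy of
`(b_1, …, b_ℓ)`, and the coefficients of a syzygy of a regular sequence lie in `J`. Hence
`(J/I)_n ≅ ⨁_{i ≤ m} (S/J)_{n - d_i}`, and `dim (S/I)_n = dim (S/J)_n + dim (J/I)_n`.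
-/

open MvPolynomial Module

attribute [local instance] MvPolynomial.gradedAlgebra

section LinearAlgebra

variable {K W M N : Type*} [Field K] [AddCommGroup W] [Module K W] [AddCommGroup M] [Module K M]
  [AddCommGroup N] [Module K N]

theorem LinearMap.finrank_map_add_finrank_comap_ker (f : M →ₗ[K] N) (p : Submodule K M)
    [FiniteDimensional K p] :
    finrank K (p.map f) + finrank K ((LinearMap.ker f).comap p.subtype) = finrank K p := by
  rw [← range_domRestrict, ← ker_domRestrict]
  exact (f.domRestrict p).finrank_range_add_finrank_ker

theorem LinearMap.finrank_add_finrank_eq_of_range_sup (Ψ : W →ₗ[K] M) {P Q : Submodule K M}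
    [FiniteDimensional K W] [FiniteDimensional K Q] (hQ : range Ψ ⊔ P = Q) :
    finrank K W + finrank K P = finrank K Q + finrank K (P.comap Ψ) := by
  have hPQ : P ≤ Q := hQ ▸ le_sup_right
  have hrange : range (P.mkQ ∘ₗ Ψ) = Q.map P.mkQ := by
    rw [range_comp, ← hQ, Submodule.map_sup, Submodule.mkQ_map_self, sup_bot_eq]
  have hker : ker (P.mkQ ∘ₗ Ψ) = P.comap Ψ := by
    rw [ker_comp, Submodule.ker_mkQ]
  have hW := (P.mkQ ∘ₗ Ψ).finrank_range_add_finrank_ker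
  have hQ' := P.mkQ.finrank_map_add_finrank_comap_ker Q
  rw [Submodule.ker_mkQ, (Submodule.comapSubtypeEquivOfLe hPQ).finrank_eq] at hQ'
  rw [hrange, hker] at hW
  omega

def Submodule.piUnivEquiv {R ι : Type*} [Semiring R] {φ : ι → Type*} [∀ i, AddCommMonoid (φ i)]
    [∀ i, Module R (φ i)] (p : ∀ i, Submodule R (φ i)) :
    Submodule.pi Set.univ p ≃ₗ[R] ∀ i, p i where
  toFun x i := ⟨x.1 i, x.2 i (Set.mem_univ i)⟩
  map_add' _ _ := rfl
  map_smul' _ _ := rfl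
  invFun x := ⟨fun i => x i, fun i _ => (x i).2⟩
  left_inv _ := rfl
  right_inv _ := rfl

theorem Submodule.finrank_pi_univ {ι : Type*} [Fintype ι] {φ : ι → Type*}
    [∀ i, AddCommGroup (φ i)] [∀ i, Module K (φ i)] (p : ∀ i, Submodule K (φ i))
    [∀ i, FiniteDimensional K (p i)] :
    finrank K (Submodule.pi Set.univ p) = ∑ i, finrank K (p i) := by
  rw [(Submodule.piUnivEquiv p).finrank_eq, finrank_pi_fintype]

end LinearAlgebra

section PrefixSquareIdeal

variable {A : Type*} [CommSemiring A] {ℓ : ℕ}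

def prefixSquareIdeal (b : Fin ℓ → A) (m : ℕ) : Ideal A :=
  Ideal.span ({x | ∃ i j : Fin ℓ, (i : ℕ) < m ∧ (j : ℕ) < m ∧ x = b i * b j} ∪
    {x | ∃ k : Fin ℓ, m ≤ (k : ℕ) ∧ x = b k})

theorem prefixSquareIdeal_le_span (b : Fin ℓ → A) (m : ℕ) :
    prefixSquareIdeal b m ≤ Ideal.span (Set.range b) := by
  rw [prefixSquareIdeal, Ideal.span_le]
  rintro x (⟨i, j, -, -, rfl⟩ | ⟨k, -, rfl⟩)
  · exact Ideal.mul_mem_left _ _ (Ideal.subset_span ⟨j, rfl⟩)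
  · exact Ideal.subset_span ⟨k, rfl⟩

theorem mem_prefixSquareIdeal {b : Fin ℓ → A} {m : ℕ} {k : Fin ℓ} (hk : m ≤ k) :
    b k ∈ prefixSquareIdeal b m :=
  Ideal.subset_span (Or.inr ⟨k, hk, rfl⟩)

theorem mul_mem_prefixSquareIdeal {b : Fin ℓ → A} {m : ℕ} {z : A}
    (hz : z ∈ Ideal.span (Set.range b)) {i : Fin ℓ} (hi : (i : ℕ) < m) :
    z * b i ∈ prefixSquareIdeal b m := by
  obtain ⟨w, rfl⟩ := Ideal.mem_span_range_iff_exists_fun.mp hz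
  rw [Finset.sum_mul]
  refine Ideal.sum_mem _ fun k _ => ?_
  by_cases hk : (k : ℕ) < m
  · rw [mul_assoc]
    exact Ideal.mul_mem_left _ _ (Ideal.subset_span (Or.inl ⟨k, i, hk, hi, rfl⟩))
  · rw [mul_right_comm]
    exact Ideal.mul_mem_left _ _ (mem_prefixSquareIdeal (not_lt.mp hk))

theorem exists_sum_mul_eq_of_mem_prefixSquareIdeal {b : Fin ℓ → A} {m : ℕ} {z : A}
    (hz : z ∈ prefixSquareIdeal b m) :
    ∃ u : Fin ℓ → A, (∀ i : Fin ℓ, (i : ℕ) < m → u i ∈ Ideal.span (Set.range b)) ∧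
      ∑ i, u i * b i = z := by
  induction hz using Submodule.span_induction with
  | mem x hx =>
    rcases hx with ⟨i, j, hi, -, rfl⟩ | ⟨k, hk, rfl⟩
    · refine ⟨(Pi.single j (b i) : Fin ℓ → A), fun k _ => ?_, by simp [Pi.single_apply]⟩
      rcases eq_or_ne k j with rfl | hkj
      · simpa using (Ideal.subset_span ⟨i, rfl⟩ : b i ∈ Ideal.span (Set.range b))
      · simp [hkj]
    · refine ⟨(Pi.single k 1 : Fin ℓ → A), fun i hi => ?_, by simp [Pi.single_apply]⟩
      simp [show i ≠ k from fun h => by subst h; omega]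
  | zero => exact ⟨0, fun _ _ => zero_mem _, by simp⟩
  | add x y _ _ hx hy =>
    obtain ⟨u, hu, rfl⟩ := hx
    obtain ⟨v, hv, rfl⟩ := hy
    exact ⟨u + v, fun i hi => add_mem (hu i hi) (hv i hi),
      by simp [add_mul, Finset.sum_add_distrib]⟩
  | smul a x _ hx =>
    obtain ⟨u, hu, rfl⟩ := hx
    exact ⟨a • u, fun i hi => Ideal.mul_mem_left _ a (hu i hi), by simp [Finset.mul_sum, mul_assoc]⟩

end PrefixSquareIdeal

section RegularSequence

variable {A : Type*} [CommRing A]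

/-- A regular sequence without the requirement `Ideal.span (Set.range b) ≠ ⊤`. -/
def IsWeaklyRegularFamily {ℓ : ℕ} (b : Fin ℓ → A) : Prop :=
  ∀ i : Fin ℓ, ∀ x : A,
    x * b i ∈ Ideal.span (b '' {j | j < i}) → x ∈ Ideal.span (b '' {j | j < i})

theorem Fin.image_castSucc_setOf_lt {α : Type*} {ℓ : ℕ} (b : Fin (ℓ + 1) → α) (i : Fin ℓ) :
    (b ∘ Fin.castSucc) '' {j | j < i} = b '' {j | j < i.castSucc} := by
  ext x
  constructor
  · rintro ⟨j, hj, rfl⟩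
    exact ⟨j.castSucc, Fin.castSucc_lt_castSucc_iff.mpr hj, rfl⟩
  · rintro ⟨j, hj, rfl⟩
    obtain ⟨j, rfl⟩ := Fin.exists_castSucc_eq.mpr (Fin.ne_last_of_lt hj)
    exact ⟨j, Fin.castSucc_lt_castSucc_iff.mp hj, rfl⟩

theorem Fin.image_setOf_lt_last {α : Type*} {ℓ : ℕ} (b : Fin (ℓ + 1) → α) :
    b '' {j | j < Fin.last ℓ} = Set.range (b ∘ Fin.castSucc) := by
  ext x
  constructor
  · rintro ⟨j, hj, rfl⟩
    obtain ⟨j, rfl⟩ := Fin.exists_castSucc_eq.mpr (Fin.ne_last_of_lt hj)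
    exact ⟨j, rfl⟩
  · rintro ⟨j, rfl⟩
    exact ⟨j.castSucc, Fin.castSucc_lt_last j, rfl⟩

theorem IsWeaklyRegularFamily.castSucc {ℓ : ℕ} {b : Fin (ℓ + 1) → A}
    (hb : IsWeaklyRegularFamily b) : IsWeaklyRegularFamily (b ∘ Fin.castSucc) := by
  intro i x
  rw [Fin.image_castSucc_setOf_lt]
  exact hb i.castSucc x

theorem IsWeaklyRegularFamily.mem_span_of_sum_mul_eq_zero :
    ∀ {ℓ : ℕ} {b : Fin ℓ → A}, IsWeaklyRegularFamily b → ∀ y : Fin ℓ → A,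
      ∑ i, y i * b i = 0 → ∀ i, y i ∈ Ideal.span (Set.range b)
  | 0, _, _, _, _, i => i.elim0
  | ℓ + 1, b, hb, y, hy, i => by
    set b' := b ∘ Fin.castSucc
    have hspan : Ideal.span (Set.range b') ≤ Ideal.span (Set.range b) :=
      Ideal.span_mono (Set.range_comp_subset_range _ _)
    rw [Fin.sum_univ_castSucc] at hy
    have hlast : y (Fin.last ℓ) ∈ Ideal.span (Set.range b') := by
      rw [← Fin.image_setOf_lt_last]
      refine hb _ _ ?_
      rw [Fin.image_setOf_lt_last, eq_neg_of_add_eq_zero_right hy]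
      exact neg_mem (Ideal.sum_mem _ fun j _ => Ideal.mul_mem_left _ _ (Ideal.subset_span ⟨j, rfl⟩))
    -- Absorbing `y (last ℓ) = ∑ z j * b j` into the other coefficients gives a shorter syzygy.
    obtain ⟨z, hz⟩ := Ideal.mem_span_range_iff_exists_fun.mp hlast
    have hsyz : ∑ j, (y j.castSucc + z j * b (Fin.last ℓ)) * b' j = 0 := by
      have hz' : ∑ j, z j * b (Fin.last ℓ) * b' j = y (Fin.last ℓ) * b (Fin.last ℓ) := by
        rw [← hz, Finset.sum_mul]
        exact Finset.sum_congr rfl fun j _ => mul_right_comm _ _ _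
      rw [← hy, ← hz', ← Finset.sum_add_distrib]
      exact Finset.sum_congr rfl fun j _ => add_mul _ _ _
    induction i using Fin.lastCases with
    | last => exact hspan hlast
    | cast j =>
      rw [← add_sub_cancel_right (y j.castSucc) (z j * b (Fin.last ℓ))]
      exact sub_mem (hspan (hb.castSucc.mem_span_of_sum_mul_eq_zero _ hsyz j))
        (Ideal.mul_mem_left _ _ (Ideal.subset_span ⟨_, rfl⟩))

theorem IsWeaklyRegularFamily.mem_span_of_sum_mul_mem_prefixSquareIdeal {ℓ : ℕ} {b : Fin ℓ → A}
    (hb : IsWeaklyRegularFamily b) {m : ℕ} {y : Fin ℓ → A}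
    (hy : ∑ i, y i * b i ∈ prefixSquareIdeal b m) {i : Fin ℓ} (hi : (i : ℕ) < m) :
    y i ∈ Ideal.span (Set.range b) := by
  obtain ⟨u, hu, hsum⟩ := exists_sum_mul_eq_of_mem_prefixSquareIdeal hy
  have hsyz : ∑ k, (y - u) k * b k = 0 := by
    simp only [Pi.sub_apply, sub_mul, Finset.sum_sub_distrib, hsum, sub_self]
  rw [← sub_add_cancel (y i) (u i)]
  exact add_mem (hb.mem_span_of_sum_mul_eq_zero _ hsyz i) (hu i hi)

end RegularSequence

section Graded

variable {σ R K : Type*} [CommSemiring R] [Field K]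

instance [Finite σ] (n : ℕ) : FiniteDimensional K (homogeneousSubmodule σ K n) :=
  Module.Finite.iff_fg.mpr (homogeneousSubmodule_fg σ K n)

theorem MvPolynomial.homogeneousComponent_mul_of_isHomogeneous {g : MvPolynomial σ R} {e : ℕ}
    (hg : g.IsHomogeneous e) (f : MvPolynomial σ R) (n : ℕ) :
    homogeneousComponent n (f * g) = if e ≤ n then homogeneousComponent (n - e) f * g else 0 := by
  rw [← decomposition.decompose'_apply, ← decomposition.decompose'_apply]
  exact DirectSum.coe_decompose_mul_of_right_mem (homogeneousSubmodule σ R) n hg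

theorem MvPolynomial.exists_sum_mul_eq_of_mem_span {ι : Type*} [Fintype ι]
    {b : ι → MvPolynomial σ R} {d : ι → ℕ} (hb : ∀ i, (b i).IsHomogeneous (d i))
    {y : MvPolynomial σ R} (hy : y ∈ Ideal.span (Set.range b)) {n : ℕ} (hyn : y.IsHomogeneous n) :
    ∃ c : ι → MvPolynomial σ R, (∀ i, (c i).IsHomogeneous (n - d i)) ∧
      (∀ i, n < d i → c i = 0) ∧ ∑ i, c i * b i = y := by
  obtain ⟨f, rfl⟩ := Ideal.mem_span_range_iff_exists_fun.mp hy
  refine ⟨fun i => if d i ≤ n then homogeneousComponent (n - d i) (f i) else 0,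
    fun i => ?_, fun i hi => if_neg (by omega), ?_⟩
  · dsimp only
    split_ifs
    · exact homogeneousComponent_isHomogeneous _ _
    · exact isHomogeneous_zero _ _ _
  · calc ∑ i, (if d i ≤ n then homogeneousComponent (n - d i) (f i) else 0) * b i
        = homogeneousComponent n (∑ i, f i * b i) := by
          rw [map_sum]
          refine Finset.sum_congr rfl fun i _ => ?_
          rw [homogeneousComponent_mul_of_isHomogeneous (hb i), ite_mul, zero_mul]
      _ = ∑ i, f i * b i := by rw [homogeneousComponent_of_mem hyn, if_pos rfl]

theorem isHomogeneous_span_range {ι : Type*} {b : ι → MvPolynomial σ R} {d : ι → ℕ}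
    (hb : ∀ i, (b i).IsHomogeneous (d i)) :
    (Ideal.span (Set.range b)).IsHomogeneous (homogeneousSubmodule σ R) :=
  Ideal.homogeneous_span _ _ <| by
    rintro _ ⟨i, rfl⟩
    exact ⟨_, hb i⟩

theorem isHomogeneous_prefixSquareIdeal {ℓ : ℕ} {b : Fin ℓ → MvPolynomial σ R} {d : Fin ℓ → ℕ}
    (hb : ∀ i, (b i).IsHomogeneous (d i)) (m : ℕ) :
    (prefixSquareIdeal b m).IsHomogeneous (homogeneousSubmodule σ R) :=
  Ideal.homogeneous_span _ _ <| by
    rintro x (⟨i, j, -, -, rfl⟩ | ⟨k, -, rfl⟩)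
    exacts [⟨_, (hb i).mul (hb j)⟩, ⟨_, hb k⟩]

noncomputable def Ideal.gradedPart (I : Ideal (MvPolynomial σ K)) (n : ℕ) :
    Submodule K (homogeneousSubmodule σ K n) :=
  (I.restrictScalars K).comap (homogeneousSubmodule σ K n).subtype

theorem Ideal.finrank_map_mk_add_finrank_gradedPart [Finite σ] (I : Ideal (MvPolynomial σ K))
    (n : ℕ) :
    finrank K ((homogeneousSubmodule σ K n).map (Ideal.Quotient.mkₐ K I).toLinearMap) +
      finrank K (I.gradedPart n) = finrank K (homogeneousSubmodule σ K n) := by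
  have hker : LinearMap.ker (Ideal.Quotient.mkₐ K I).toLinearMap = I.restrictScalars K := by
    ext
    simp [Ideal.Quotient.eq_zero_iff_mem]
  rw [Ideal.gradedPart, ← hker]
  exact LinearMap.finrank_map_add_finrank_comap_ker _ _

noncomputable def sumMulHom {ι : Type*} {b : ι → MvPolynomial σ K} {d : ι → ℕ}
    (hb : ∀ i, (b i).IsHomogeneous (d i)) {s : Finset ι} {n : ℕ} (hs : ∀ i ∈ s, d i ≤ n) :
    (∀ i : s, homogeneousSubmodule σ K (n - d i)) →ₗ[K] homogeneousSubmodule σ K n :=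
  ∑ i : s, (LinearMap.mulRight K (b i)).restrict (p := homogeneousSubmodule σ K (n - d i))
    (fun x hx => by simpa [Nat.sub_add_cancel (hs i i.2)] using hx.mul (hb i)) ∘ₗ
      LinearMap.proj i

theorem coe_sumMulHom_apply {ι : Type*} {b : ι → MvPolynomial σ K} {d : ι → ℕ}
    (hb : ∀ i, (b i).IsHomogeneous (d i)) {s : Finset ι} {n : ℕ} (hs : ∀ i ∈ s, d i ≤ n)
    (x : ∀ i : s, homogeneousSubmodule σ K (n - d i)) :
    (sumMulHom hb hs x : MvPolynomial σ K) = ∑ i : s, (x i : MvPolynomial σ K) * b i := by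
  simp [sumMulHom]

end Graded

section QuotientDimension

variable {σ K : Type*} [Field K] {ℓ : ℕ} {b : Fin ℓ → MvPolynomial σ K} {d : Fin ℓ → ℕ}

theorem range_sumMulHom_sup_gradedPart (hb : ∀ i, (b i).IsHomogeneous (d i)) {m n : ℕ}
    {s : Finset (Fin ℓ)} (hs : ∀ i ∈ s, d i ≤ n)
    (hcover : ∀ i : Fin ℓ, (i : ℕ) < m → d i ≤ n → i ∈ s) :
    LinearMap.range (sumMulHom hb hs) ⊔ (prefixSquareIdeal b m).gradedPart n =
      (Ideal.span (Set.range b)).gradedPart n := by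
  apply le_antisymm
  · refine sup_le ?_ fun y hy => prefixSquareIdeal_le_span b m hy
    rintro _ ⟨x, rfl⟩
    show (sumMulHom hb hs x : MvPolynomial σ K) ∈ Ideal.span (Set.range b)
    rw [coe_sumMulHom_apply]
    exact Ideal.sum_mem _ fun i _ => Ideal.mul_mem_left _ _ (Ideal.subset_span ⟨i, rfl⟩)
  · intro y hy
    have hyJ : (y : MvPolynomial σ K) ∈ Ideal.span (Set.range b) := hy
    obtain ⟨c, hc, hc0, hsum⟩ := exists_sum_mul_eq_of_mem_span hb hyJ y.2
    let x : ∀ i : s, homogeneousSubmodule σ K (n - d i) := fun i => ⟨c i, hc i⟩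
    refine Submodule.mem_sup.mpr ⟨_, ⟨x, rfl⟩, y - sumMulHom hb hs x, ?_, add_sub_cancel _ _⟩
    show (y : MvPolynomial σ K) - sumMulHom hb hs x ∈ prefixSquareIdeal b m
    rw [coe_sumMulHom_apply, ← hsum, Finset.sum_coe_sort s (fun i => c i * b i),
      ← Finset.sum_add_sum_compl s, add_sub_cancel_left]
    refine Ideal.sum_mem _ fun k hk => ?_
    by_cases hkm : (k : ℕ) < m
    · have hkn : n < d k := not_le.mp fun hkn => Finset.mem_compl.mp hk (hcover k hkm hkn)
      rw [hc0 k hkn, zero_mul]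
      exact zero_mem _
    · exact Ideal.mul_mem_left _ _ (mem_prefixSquareIdeal (not_lt.mp hkm))

theorem IsWeaklyRegularFamily.comap_sumMulHom_gradedPart (hb : ∀ i, (b i).IsHomogeneous (d i))
    (hreg : IsWeaklyRegularFamily b) {m n : ℕ} {s : Finset (Fin ℓ)} (hs : ∀ i ∈ s, d i ≤ n)
    (hsm : ∀ i ∈ s, (i : ℕ) < m) :
    ((prefixSquareIdeal b m).gradedPart n).comap (sumMulHom hb hs) =
      Submodule.pi Set.univ fun i : s => (Ideal.span (Set.range b)).gradedPart (n - d i) := by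
  ext x
  simp only [Submodule.mem_comap, Submodule.mem_pi, Set.mem_univ, true_implies, Ideal.gradedPart,
    Submodule.coe_subtype, Submodule.restrictScalars_mem, coe_sumMulHom_apply]
  constructor
  · intro hx i
    let y : Fin ℓ → MvPolynomial σ K := fun k => if h : k ∈ s then x ⟨k, h⟩ else 0
    have hy : ∑ k, y k * b k = ∑ i : s, (x i : MvPolynomial σ K) * b i := by
      rw [← Finset.sum_subset (Finset.subset_univ s) (fun k _ hk => by simp [y, hk]),
        ← Finset.sum_coe_sort s]
      exact Finset.sum_congr rfl fun i _ => by simp [y]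
    have hyi : y i = x i := by simp [y]
    exact hyi ▸ hreg.mem_span_of_sum_mul_mem_prefixSquareIdeal (hy ▸ hx) (hsm i i.2)
  · intro hx
    exact Ideal.sum_mem _ fun i _ => mul_mem_prefixSquareIdeal (hx i) (hsm i i.2)

theorem IsWeaklyRegularFamily.finrank_map_mk_prefixSquareIdeal [Finite σ]
    (hb : ∀ i, (b i).IsHomogeneous (d i)) (hreg : IsWeaklyRegularFamily b) (m n : ℕ) :
    finrank K ((homogeneousSubmodule σ K n).map
        (Ideal.Quotient.mkₐ K (prefixSquareIdeal b m)).toLinearMap) =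
      finrank K ((homogeneousSubmodule σ K n).map
        (Ideal.Quotient.mkₐ K (Ideal.span (Set.range b))).toLinearMap) +
      ∑ i ∈ Finset.univ.filter (fun i : Fin ℓ => (i : ℕ) < m ∧ d i ≤ n),
        finrank K ((homogeneousSubmodule σ K (n - d i)).map
          (Ideal.Quotient.mkₐ K (Ideal.span (Set.range b))).toLinearMap) := by
  set s := Finset.univ.filter (fun i : Fin ℓ => (i : ℕ) < m ∧ d i ≤ n)
  have hs : ∀ i ∈ s, d i ≤ n := fun i hi => (Finset.mem_filter.mp hi).2.2
  have hdim := (sumMulHom hb hs).finrank_add_finrank_eq_of_range_sup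
    (range_sumMulHom_sup_gradedPart (m := m) hb hs fun i him hin => by simp [s, him, hin])
  rw [hreg.comap_sumMulHom_gradedPart hb hs fun i hi => (Finset.mem_filter.mp hi).2.1,
    Submodule.finrank_pi_univ, finrank_pi_fintype] at hdim
  have hpieces := Finset.sum_congr (s₁ := Finset.univ) rfl
    fun (i : s) _ => (Ideal.span (Set.range b)).finrank_map_mk_add_finrank_gradedPart (n - d i)
  rw [Finset.sum_add_distrib] at hpieces
  have hI := (prefixSquareIdeal b m).finrank_map_mk_add_finrank_gradedPart n
  have hJ := (Ideal.span (Set.range b)).finrank_map_mk_add_finrank_gradedPart n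
  rw [← Finset.sum_coe_sort s]
  omega

end QuotientDimension

theorem graded_dim_quotient_regular_sequence_general (p ℓ m : ℕ) (hp : p.Prime)
    (b : Fin ℓ → MvPolynomial (Fin ℓ) (ZMod p)) (d : Fin ℓ → ℕ)
    (hhom : ∀ i, (b i).IsHomogeneous (d i))
    -- `(b_1, ..., b_ℓ)` is a regular sequence:
    (hreg : ∀ i : Fin ℓ, ∀ x : MvPolynomial (Fin ℓ) (ZMod p),
      x * b i ∈ Ideal.span (b '' {j | j < i}) → x ∈ Ideal.span (b '' {j | j < i}))
    (I J : Ideal (MvPolynomial (Fin ℓ) (ZMod p)))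
    (hI : I = Ideal.span
      ({x | ∃ i j : Fin ℓ, (i : ℕ) < m ∧ (j : ℕ) < m ∧ x = b i * b j} ∪
        {x | ∃ k : Fin ℓ, m ≤ (k : ℕ) ∧ x = b k}))
    (hJ : J = Ideal.span (Set.range b)) :
    -- `I` and `J` are homogeneous ideals:
    (∀ x ∈ I, ∀ n : ℕ, homogeneousComponent n x ∈ I) ∧
    (∀ x ∈ J, ∀ n : ℕ, homogeneousComponent n x ∈ J) ∧
    -- dimension count in each degree `n`:
    (∀ n : ℕ,
      Module.finrank (ZMod p)
        ((homogeneousSubmodule (Fin ℓ) (ZMod p) n).map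
          (Ideal.Quotient.mkₐ (ZMod p) I).toLinearMap) =
      Module.finrank (ZMod p)
        ((homogeneousSubmodule (Fin ℓ) (ZMod p) n).map
          (Ideal.Quotient.mkₐ (ZMod p) J).toLinearMap) +
      ∑ i ∈ Finset.univ.filter (fun i : Fin ℓ => (i : ℕ) < m ∧ d i ≤ n),
        Module.finrank (ZMod p)
          ((homogeneousSubmodule (Fin ℓ) (ZMod p) (n - d i)).map
            (Ideal.Quotient.mkₐ (ZMod p) J).toLinearMap)) := by
  have : Fact p.Prime := ⟨hp⟩
  have hI' : I = prefixSquareIdeal b m := hI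
  subst hI' hJ
  exact ⟨fun x hx => homogeneousComponent_mem_of_mem (isHomogeneous_prefixSquareIdeal hhom m) hx,
    fun x hx => homogeneousComponent_mem_of_mem (isHomogeneous_span_range hhom) hx,
    IsWeaklyRegularFamily.finrank_map_mk_prefixSquareIdeal hhom hreg m⟩

/-- let `S = 𝔽_p[t_1, ..., t_ℓ]`, let `(b_1, ..., b_ℓ)` be a
regular sequence of homogeneous polynomials with `d_i = deg b_i > 0`, let
`1 ≤ m ≤ ℓ`, and let `I = (b_i b_j (i, j ≤ m), b_k (k > m))`,
`J = (b_1, ..., b_ℓ)`.  Then `I` and `J` are homogeneous ideals and for every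
`n` one has
`dim (S/I)_n = dim (S/J)_n + Σ_{i ≤ m, d_i ≤ n} dim (S/J)_{n - d_i}`,
i.e. `S/I ≅ S/J ⊕ ⊕_{i=1}^m (S/J)(-d_i)` as graded `𝔽_p`-vector spaces. -/
theorem graded_dim_quotient_regular_sequence (p ℓ m : ℕ) (hp : p.Prime)
    (hℓ : 1 ≤ ℓ) (hm1 : 1 ≤ m) (hmℓ : m ≤ ℓ)
    (b : Fin ℓ → MvPolynomial (Fin ℓ) (ZMod p)) (d : Fin ℓ → ℕ)
    (hd : ∀ i, 0 < d i)
    (hhom : ∀ i, (b i).IsHomogeneous (d i))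
    -- `(b_1, ..., b_ℓ)` is a regular sequence:
    (hreg : ∀ i : Fin ℓ, ∀ x : MvPolynomial (Fin ℓ) (ZMod p),
      x * b i ∈ Ideal.span (b '' {j | j < i}) → x ∈ Ideal.span (b '' {j | j < i}))
    (hne : Ideal.span (Set.range b) ≠ ⊤)
    (I J : Ideal (MvPolynomial (Fin ℓ) (ZMod p)))
    (hI : I = Ideal.span
      ({x | ∃ i j : Fin ℓ, (i : ℕ) < m ∧ (j : ℕ) < m ∧ x = b i * b j} ∪
        {x | ∃ k : Fin ℓ, m ≤ (k : ℕ) ∧ x = b k}))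
    (hJ : J = Ideal.span (Set.range b)) :
    -- `I` and `J` are homogeneous ideals:
    (∀ x ∈ I, ∀ n : ℕ, homogeneousComponent n x ∈ I) ∧
    (∀ x ∈ J, ∀ n : ℕ, homogeneousComponent n x ∈ J) ∧
    -- dimension count in each degree `n`:
    (∀ n : ℕ,
      Module.finrank (ZMod p)
        ((homogeneousSubmodule (Fin ℓ) (ZMod p) n).map
          (Ideal.Quotient.mkₐ (ZMod p) I).toLinearMap) =
      Module.finrank (ZMod p)
        ((homogeneousSubmodule (Fin ℓ) (ZMod p) n).map
          (Ideal.Quotient.mkₐ (ZMod p) J).toLinearMap) +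
      ∑ i ∈ Finset.univ.filter (fun i : Fin ℓ => (i : ℕ) < m ∧ d i ≤ n),
        Module.finrank (ZMod p)
          ((homogeneousSubmodule (Fin ℓ) (ZMod p) (n - d i)).map
            (Ideal.Quotient.mkₐ (ZMod p) J).toLinearMap)) :=
  graded_dim_quotient_regular_sequence_general p ℓ m hp b d hhom hreg I J hI hJ
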